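/- Let X, Y, W : 𝔻 → ℂ be holomorphic on the open unit disk with W' = −Y·X', 1 < |X(z)| < 2 and |Y(z)| < 1/3 for all z ∈ 𝔻, and assume the metric dσ² = |dX|² + |dY|² is complete, i.e., every divergent C¹ path γ : [0,∞) → 𝔻 satisfies ∫₀^∞ √(|X'(γ(t))|² + |Y'(γ(t))|²)·|γ'(t)| dt = ∞. Then for every divergent C¹ path γ : [0,∞) → 𝔻 along which both |e^{−W(γ(t))}| and |(1 + X(γ(t))Y(γ(t)))·e^{W(γ(t))}| are bounded above, one has ∫₀^∞ √(|e^{−2W(γ(t))} X'(γ(t))|² + |e^{2W(γ(t))}(Y'(γ(t)) − Y(γ(t))² X'(γ(t)))|²)·|γ'(t)| dt = ∞. -/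

import Mathlib

/-!
Along a path on which `|e^{-W}|` and `|(1 + XY) e^{W}|` are bounded by `m`, the factor
`|e^{W}|` stays in `[1/m, 3m]`, because `|1 + XY| > 1 - 2 · 1/3 = 1/3`. Hence the conformal
factors `|e^{∓2W}|` of `ω` and `θ` are bounded below by `1/(3m)²`. Since `|Y²| ≤ 1`, the form
`dY` is controlled by `dY - Y² dX` and `dX`, so `ds²_ℒ ≥ c · dσ²` along the path for a constant
`c > 0`, and the completeness of `dσ²` gives infinite `ds²_ℒ`-length.
-/

open MeasureTheory

/-- A `C¹` path in the unit disk is divergent if it eventually leaves every compact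
subset of the disk. -/
def IsDivergentPath (γ : ℝ → ℂ) : Prop :=
  ContDiff ℝ 1 γ ∧ (∀ t : ℝ, γ t ∈ Metric.ball (0 : ℂ) 1) ∧
    ∀ K : Set ℂ, IsCompact K → K ⊆ Metric.ball (0 : ℂ) 1 →
      ∃ T : ℝ, ∀ t ≥ T, γ t ∉ K

lemma setLIntegral_eq_top_of_const_mul_le {α : Type*} [MeasurableSpace α] {μ : Measure α}
    {s : Set α} {f g : α → ENNReal} {c : ENNReal} (hs : MeasurableSet s) (hc : c ≠ 0)
    (hfg : ∀ x ∈ s, c * f x ≤ g x) (hf : ∫⁻ x in s, f x ∂μ = ⊤) :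
    ∫⁻ x in s, g x ∂μ = ⊤ :=
  top_unique <| calc
    ⊤ = c * ∫⁻ x in s, f x ∂μ := by rw [hf, ENNReal.mul_top hc]
    _ ≤ ∫⁻ x in s, c * f x ∂μ := lintegral_const_mul_le c f
    _ ≤ ∫⁻ x in s, g x ∂μ := lintegral_mono_ae (ae_restrict_of_forall_mem hs hfg)

section NormedRing

variable {R : Type*} [SeminormedRing R]

lemma sqrt_norm_sq_add_norm_sq_le_two_mul (u v k : R) (hk : ‖k‖ ≤ 1) :
    √(‖u‖ ^ 2 + ‖v‖ ^ 2) ≤ 2 * √(‖u‖ ^ 2 + ‖v - k * u‖ ^ 2) := by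
  have hv : ‖v‖ ≤ ‖v - k * u‖ + ‖u‖ := calc
    ‖v‖ = ‖(v - k * u) + k * u‖ := by rw [sub_add_cancel]
    _ ≤ ‖v - k * u‖ + ‖k‖ * ‖u‖ := (norm_add_le _ _).trans (by gcongr; exact norm_mul_le k u)
    _ ≤ ‖v - k * u‖ + ‖u‖ := by gcongr; exact mul_le_of_le_one_left (norm_nonneg _) hk
  have hsq : ‖v‖ ^ 2 ≤ (‖v - k * u‖ + ‖u‖) ^ 2 := by gcongr
  rw [show (2 : ℝ) = √(2 ^ 2) by simp, ← Real.sqrt_mul (by positivity)]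
  exact Real.sqrt_le_sqrt (by nlinarith [sq_nonneg (‖v - k * u‖ - ‖u‖)])

lemma one_third_lt_norm_one_add_mul [NormOneClass R] {x y : R} (hx : ‖x‖ < 2)
    (hy : ‖y‖ < 1 / 3) : 1 / 3 < ‖1 + x * y‖ := by
  have hxy : ‖x * y‖ < 2 / 3 := (norm_mul_le x y).trans_lt <| by
    nlinarith [norm_nonneg x, norm_nonneg y]
  have := norm_sub_norm_le (1 : R) (-(x * y))
  rw [norm_one, norm_neg, sub_neg_eq_add] at this
  linarith

end NormedRing

lemma mul_sqrt_norm_sq_add_norm_sq_le {𝕜 : Type*} [NormedDivisionRing 𝕜] {a b : 𝕜} {c : ℝ}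
    (hc : 0 ≤ c) (ha : c ≤ ‖a‖) (hb : c ≤ ‖b‖) (u v : 𝕜) :
    c * √(‖u‖ ^ 2 + ‖v‖ ^ 2) ≤ √(‖a * u‖ ^ 2 + ‖b * v‖ ^ 2) := by
  rw [← Real.sqrt_sq hc, ← Real.sqrt_mul (sq_nonneg c), norm_mul, norm_mul]
  refine Real.sqrt_le_sqrt ?_
  have ha2 : c ^ 2 ≤ ‖a‖ ^ 2 := by gcongr
  have hb2 : c ^ 2 ≤ ‖b‖ ^ 2 := by gcongr
  nlinarith [mul_le_mul_of_nonneg_right ha2 (sq_nonneg ‖u‖),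
    mul_le_mul_of_nonneg_right hb2 (sq_nonneg ‖v‖)]

lemma norm_exp_mem_Icc_of_bounded_frame {x y w : ℂ} {m : ℝ} (hx : ‖x‖ < 2) (hy : ‖y‖ < 1 / 3)
    (hneg : ‖Complex.exp (-w)‖ ≤ m) (hpos : ‖(1 + x * y) * Complex.exp w‖ ≤ m) :
    0 < m ∧ m⁻¹ ≤ ‖Complex.exp w‖ ∧ ‖Complex.exp w‖ ≤ 3 * m := by
  have he : 0 < ‖Complex.exp w‖ := norm_pos_iff.2 (Complex.exp_ne_zero w)
  rw [Complex.exp_neg, norm_inv] at hneg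
  have hm : 0 < m := (inv_pos.2 he).trans_le hneg
  refine ⟨hm, (inv_le_comm₀ he hm).1 hneg, ?_⟩
  rw [norm_mul] at hpos
  nlinarith [one_third_lt_norm_one_add_mul hx hy]

lemma norm_exp_two_mul (w : ℂ) : ‖Complex.exp (2 * w)‖ = ‖Complex.exp w‖ ^ 2 := by
  rw [← norm_pow, ← Complex.exp_nat_mul]; norm_num

lemma norm_exp_neg_two_mul (w : ℂ) : ‖Complex.exp (-(2 * w))‖ = (‖Complex.exp w‖ ^ 2)⁻¹ := by
  rw [Complex.exp_neg, norm_inv, norm_exp_two_mul]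

lemma mul_sigma_speed_le_lift_speed {x y w : ℂ} {m : ℝ} (hx : ‖x‖ < 2) (hy : ‖y‖ < 1 / 3)
    (hneg : ‖Complex.exp (-w)‖ ≤ m) (hpos : ‖(1 + x * y) * Complex.exp w‖ ≤ m) (dx dy : ℂ) :
    ((3 * m) ^ 2)⁻¹ / 2 * √(‖dx‖ ^ 2 + ‖dy‖ ^ 2) ≤
      √(‖Complex.exp (-(2 * w)) * dx‖ ^ 2 + ‖Complex.exp (2 * w) * (dy - y ^ 2 * dx)‖ ^ 2) := by
  obtain ⟨hm, hlow, hupp⟩ := norm_exp_mem_Icc_of_bounded_frame hx hy hneg hpos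
  have hy2 : ‖y ^ 2‖ ≤ 1 := by
    rw [norm_pow]; exact pow_le_one₀ (norm_nonneg y) (by linarith)
  have hfactor_neg : ((3 * m) ^ 2)⁻¹ ≤ ‖Complex.exp (-(2 * w))‖ := by
    rw [norm_exp_neg_two_mul]
    gcongr
    exact pow_pos ((inv_pos.2 hm).trans_le hlow) 2
  have hfactor_pos : ((3 * m) ^ 2)⁻¹ ≤ ‖Complex.exp (2 * w)‖ := calc
    ((3 * m) ^ 2)⁻¹ ≤ (m ^ 2)⁻¹ := by gcongr; linarith
    _ = m⁻¹ ^ 2 := (inv_pow m 2).symm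
    _ ≤ ‖Complex.exp (2 * w)‖ := by rw [norm_exp_two_mul]; gcongr
  calc ((3 * m) ^ 2)⁻¹ / 2 * √(‖dx‖ ^ 2 + ‖dy‖ ^ 2)
      ≤ ((3 * m) ^ 2)⁻¹ / 2 * (2 * √(‖dx‖ ^ 2 + ‖dy - y ^ 2 * dx‖ ^ 2)) := by
        gcongr; exact sqrt_norm_sq_add_norm_sq_le_two_mul dx dy _ hy2
    _ = ((3 * m) ^ 2)⁻¹ * √(‖dx‖ ^ 2 + ‖dy - y ^ 2 * dx‖ ^ 2) := by ring
    _ ≤ _ := mul_sqrt_norm_sq_add_norm_sq_le (by positivity) hfactor_neg hfactor_pos _ _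

theorem lift_metric_infinite_length_on_bounded_paths_general (X Y W : ℂ → ℂ)
    (hXbd : ∀ z ∈ Metric.ball (0 : ℂ) 1,
      1 < ‖X z‖ ∧ ‖X z‖ < 2)
    (hYbd : ∀ z ∈ Metric.ball (0 : ℂ) 1, ‖Y z‖ < 1 / 3)
    (hσcomplete : ∀ γ : ℝ → ℂ, IsDivergentPath γ →
      ∫⁻ t in Set.Ici (0 : ℝ), ENNReal.ofReal
          (Real.sqrt (‖deriv X (γ t)‖ ^ 2 + ‖deriv Y (γ t)‖ ^ 2) *
            ‖deriv γ t‖) = ⊤) :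
    ∀ γ : ℝ → ℂ, IsDivergentPath γ →
      (∃ m : ℝ, ∀ t : ℝ, 0 ≤ t →
        ‖Complex.exp (-W (γ t))‖ ≤ m ∧
        ‖(1 + X (γ t) * Y (γ t)) * Complex.exp (W (γ t))‖ ≤ m) →
      ∫⁻ t in Set.Ici (0 : ℝ), ENNReal.ofReal
          (Real.sqrt
            (‖Complex.exp (-(2 * W (γ t))) * deriv X (γ t)‖ ^ 2 +
              ‖Complex.exp (2 * W (γ t)) *
                (deriv Y (γ t) - Y (γ t) ^ 2 * deriv X (γ t))‖ ^ 2) *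
            ‖deriv γ t‖) = ⊤ := by
  rintro γ hγ ⟨m, hm⟩
  have hXY (t : ℝ) : ‖X (γ t)‖ < 2 ∧ ‖Y (γ t)‖ < 1 / 3 :=
    ⟨(hXbd _ (hγ.2.1 t)).2, hYbd _ (hγ.2.1 t)⟩
  have hm0 : 0 < m :=
    (norm_exp_mem_Icc_of_bounded_frame (hXY 0).1 (hXY 0).2 (hm 0 le_rfl).1 (hm 0 le_rfl).2).1
  refine setLIntegral_eq_top_of_const_mul_le measurableSet_Ici
    (ENNReal.ofReal_pos.2 (by positivity : 0 < ((3 * m) ^ 2)⁻¹ / 2)).ne' ?_ (hσcomplete γ hγ)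
  intro t (ht : 0 ≤ t)
  rw [← ENNReal.ofReal_mul (by positivity), ← mul_assoc]
  gcongr
  exact mul_sigma_speed_le_lift_speed (hXY t).1 (hXY t).2 (hm t ht).1 (hm t ht).2 _ _

/-- Main case of Proposition 2.4: if `X, Y, W` are holomorphic on the unit disk with
`W' = −Y·X'`, `1 < |X| < 2`, `|Y| < 1/3`, and the metric `|dX|² + |dY|²` is complete,
then every divergent `C¹` path along which `|e^{−W}|` and `|(1+XY)e^{W}|` stay bounded
has infinite length in the lift metric `|e^{−2W}dX|² + |e^{2W}(dY − Y²dX)|²`. -/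
theorem lift_metric_infinite_length_on_bounded_paths (X Y W : ℂ → ℂ)
    (hX : ∀ z ∈ Metric.ball (0 : ℂ) 1, DifferentiableAt ℂ X z)
    (hY : ∀ z ∈ Metric.ball (0 : ℂ) 1, DifferentiableAt ℂ Y z)
    (hW : ∀ z ∈ Metric.ball (0 : ℂ) 1, DifferentiableAt ℂ W z)
    (hLeg : ∀ z ∈ Metric.ball (0 : ℂ) 1, deriv W z = -(Y z * deriv X z))
    (hXbd : ∀ z ∈ Metric.ball (0 : ℂ) 1,
      1 < ‖X z‖ ∧ ‖X z‖ < 2)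
    (hYbd : ∀ z ∈ Metric.ball (0 : ℂ) 1, ‖Y z‖ < 1 / 3)
    (hσcomplete : ∀ γ : ℝ → ℂ, IsDivergentPath γ →
      ∫⁻ t in Set.Ici (0 : ℝ), ENNReal.ofReal
          (Real.sqrt (‖deriv X (γ t)‖ ^ 2 + ‖deriv Y (γ t)‖ ^ 2) *
            ‖deriv γ t‖) = ⊤) :
    ∀ γ : ℝ → ℂ, IsDivergentPath γ →
      (∃ m : ℝ, ∀ t : ℝ, 0 ≤ t →
        ‖Complex.exp (-W (γ t))‖ ≤ m ∧
        ‖(1 + X (γ t) * Y (γ t)) * Complex.exp (W (γ t))‖ ≤ m) →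
      ∫⁻ t in Set.Ici (0 : ℝ), ENNReal.ofReal
          (Real.sqrt
            (‖Complex.exp (-(2 * W (γ t))) * deriv X (γ t)‖ ^ 2 +
              ‖Complex.exp (2 * W (γ t)) *
                (deriv Y (γ t) - Y (γ t) ^ 2 * deriv X (γ t))‖ ^ 2) *
            ‖deriv γ t‖) = ⊤ :=
  lift_metric_infinite_length_on_bounded_paths_general X Y W hXbd hYbd hσcomplete
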